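/- arXiv:1310.0784 — 5 statements merged into one kernel-verified Lean document; each statement's English description precedes it below -/
import Mathlib

section
/- On the polynomial model of the Thomas bundle, with vector fields of the form X = X^a(x,t)∂_{x^a} + X^0(x,t)·w where w = t∂_t, the divergence div X := ∂_a X^a + (w−1)(X^0) satisfies div[X,Y] = X(div Y) − Y(div X). -/
/- Model of the Thomas bundle: the algebra of densities is
`AddMonoidAlgebra R ℝ` where `R` is a commutative ℝ-algebra modeling
`C^∞(ℝ^n)`, equipped with `n` pairwise commuting derivations `D a` modeling
`∂/∂x^a`; the formal variable of `AddMonoidAlgebra R ℝ` models `t = |Dx|`, so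
`Finsupp.single λ f` is the density `f(x) t^λ`.  A vector field
`X = Σ X^a ∂_a + X^0 · t∂_t` is given by its coefficients
`Xa : Fin n → Den`, `X0 : Den`.  Its action on densities is `act`, its
divergence is `div X = Σ ∂_a X^a + (t∂_t − 1) X^0`, and the commutator
`[X,Y]` has coefficients `X(Y^b) − Y(X^b)` and `X(Y^0) − Y(X^0)`.
Claim: `div [X,Y] = X(div Y) − Y(div X)`. -/

noncomputable section

variable {R : Type*} [CommRing R] [Algebra ℝ R]

/-- The weight operator `t ∂/∂t` on densities. -/
def wop (ψ : AddMonoidAlgebra R ℝ) : AddMonoidAlgebra R ℝ :=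
  AddMonoidAlgebra.ofCoeff (Finsupp.sum ψ.coeff fun l c => Finsupp.single l (l • c))

/-- The coefficientwise partial derivative `∂/∂x^a` on densities. -/
def paD {n : ℕ} (D : Fin n → Derivation ℝ R R) (a : Fin n)
    (ψ : AddMonoidAlgebra R ℝ) : AddMonoidAlgebra R ℝ :=
  AddMonoidAlgebra.ofCoeff (Finsupp.mapRange (D a) (map_zero _) ψ.coeff)

/-- Action of the vector field `Σ Xa^a ∂_a + X0 · t∂_t` on a density. -/
def act {n : ℕ} (D : Fin n → Derivation ℝ R R)
    (Xa : Fin n → AddMonoidAlgebra R ℝ) (X0 : AddMonoidAlgebra R ℝ)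
    (ψ : AddMonoidAlgebra R ℝ) : AddMonoidAlgebra R ℝ :=
  (∑ a, Xa a * paD D a ψ) + X0 * wop ψ

/-- Canonical divergence `div X = Σ ∂_a X^a + (t∂_t − 1)(X^0)`. -/
def divg {n : ℕ} (D : Fin n → Derivation ℝ R R)
    (Xa : Fin n → AddMonoidAlgebra R ℝ) (X0 : AddMonoidAlgebra R ℝ) :
    AddMonoidAlgebra R ℝ :=
  (∑ a, paD D a (Xa a)) + wop X0 - X0

/-! `∂_a` and `t∂_t` are pairwise commuting derivations of the density algebra, and the identity
already holds for the divergence `Σ_i d_i V^i` of fields `Σ_i V^i d_i` over any finite commuting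
family of derivations `d_i`: expanding `Σ_i d_i (V(W^i) − W(V^i))` by Leibniz, the second-order
terms give `V(div W) − W(div V)` because the `d_i` commute, and the first-order terms
`Σ_{i,j} d_i V^j · d_j W^i` are symmetric in `V, W`. The extra `−X^0` in `div` is linear in the
coefficients, so it contributes `−(X(Y^0) − Y(X^0))` to both sides. -/

section Frame

variable {k A ι : Type*} [CommSemiring k] [CommRing A] [Algebra k A] [Fintype ι]
  (d : ι → Derivation k A A)

/- Fields are encoded by their coefficients relative to `d`: the divergence depends on the
family, not only on the derivation `Σ_i V i • d i`. -/

def frameAct (V : ι → A) (f : A) : A := ∑ i, V i * d i f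

def frameDiv (V : ι → A) : A := ∑ i, d i (V i)

def frameBracket (V W : ι → A) : ι → A := fun i => frameAct d V (W i) - frameAct d W (V i)

theorem frameAct_sub (V : ι → A) (f g : A) :
    frameAct d V (f - g) = frameAct d V f - frameAct d V g := by
  simp only [frameAct, map_sub, mul_sub, Finset.sum_sub_distrib]

variable {d}

theorem frameDiv_frameAct (hd : ∀ i j f, d i (d j f) = d j (d i f)) (V W : ι → A) :
    ∑ i, d i (frameAct d V (W i))
      = frameAct d V (frameDiv d W) + ∑ i, ∑ j, d i (V j) * d j (W i) := by
  simp only [frameAct, frameDiv, map_sum, Derivation.leibniz, smul_eq_mul, Finset.sum_add_distrib,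
    Finset.mul_sum]
  congr 1
  · rw [Finset.sum_comm]
    exact Finset.sum_congr rfl fun i _ => Finset.sum_congr rfl fun j _ => by rw [hd]
  · exact Finset.sum_congr rfl fun i _ => Finset.sum_congr rfl fun j _ => mul_comm _ _

theorem frameDiv_frameBracket (hd : ∀ i j f, d i (d j f) = d j (d i f)) (V W : ι → A) :
    frameDiv d (frameBracket d V W)
      = frameAct d V (frameDiv d W) - frameAct d W (frameDiv d V) := by
  have hcross : ∑ i, ∑ j, d i (V j) * d j (W i) = ∑ i, ∑ j, d i (W j) * d j (V i) := by
    rw [Finset.sum_comm]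
    exact Finset.sum_congr rfl fun _ _ => Finset.sum_congr rfl fun _ _ => mul_comm _ _
  simp only [frameDiv, frameBracket, map_sub, Finset.sum_sub_distrib]
  rw [frameDiv_frameAct hd, frameDiv_frameAct hd, hcross]
  abel

end Frame

theorem Finsupp.sum_single_smul_apply {k M S : Type*} [Zero k] [AddCommMonoid S]
    [SMulWithZero k S] (g : M → k) (f : M →₀ S) (m : M) :
    (f.sum fun l c => Finsupp.single l (g l • c)) m = g m • f m := by
  classical
  simp +contextual [Finsupp.sum_apply, Finsupp.single_apply]

namespace AddMonoidAlgebra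

variable {k S M : Type*} [CommSemiring k] [CommRing S] [Algebra k S] [AddCommMonoid M]

theorem map_mul_of_map_single_mul_single (L : S[M] →ₗ[k] S[M])
    (h : ∀ a b r s, L (single a r * single b s)
      = single a r * L (single b s) + single b s * L (single a r))
    (x y : S[M]) : L (x * y) = x * L y + y * L x := by
  induction x using AddMonoidAlgebra.induction_linear with
  | zero => simp
  | add x₁ x₂ h₁ h₂ => rw [add_mul, map_add, h₁, h₂, map_add]; ring
  | single a r =>
    induction y using AddMonoidAlgebra.induction_linear with
    | zero => simp
    | add y₁ y₂ h₁ h₂ => rw [mul_add, map_add, h₁, h₂, map_add]; ring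
    | single b s => exact h a b r s

def coeffDerivation (δ : Derivation k S S) : Derivation k S[M] S[M] :=
  Derivation.mk'
    ({ toFun x := ofCoeff (x.coeff.mapRange δ (map_zero δ))
       map_add' x y := by ext; simp
       map_smul' c x := by ext; simp } : S[M] →ₗ[k] S[M]) <|
    map_mul_of_map_single_mul_single _ fun a b r s => by
      simp only [single_mul_single, LinearMap.coe_mk, AddHom.coe_mk, coeff_single,
        Finsupp.mapRange_single, ofCoeff_single, Derivation.leibniz, smul_eq_mul, single_add,
        add_comm b a]

def weightDerivation (w : M →+ k) : Derivation k S[M] S[M] :=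
  Derivation.mk'
    ({ toFun x := ofCoeff (x.coeff.sum fun m c => Finsupp.single m (w m • c))
       map_add' x y := by
         ext
         simp only [coeff_add, Finsupp.add_apply, Finsupp.sum_single_smul_apply, smul_add]
       map_smul' c x := by
         ext
         simp only [coeff_smul, Finsupp.smul_apply, Finsupp.sum_single_smul_apply,
           RingHom.id_apply, smul_comm c] } : S[M] →ₗ[k] S[M]) <|
    map_mul_of_map_single_mul_single _ fun a b r s => by
      simp only [single_mul_single, LinearMap.coe_mk, AddHom.coe_mk, coeff_single,
        Finsupp.sum_single_index, smul_zero, Finsupp.single_zero, ofCoeff_single]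
      rw [add_comm b a, ← single_add, map_add, add_smul, mul_smul_comm, mul_smul_comm,
        mul_comm s r, add_comm (w a • (r * s))]

theorem coeff_weightDerivation (w : M →+ k) (x : S[M]) (m : M) :
    (weightDerivation w x).coeff m = w m • x.coeff m :=
  Finsupp.sum_single_smul_apply _ _ _

theorem coeffDerivation_comm (δ₁ δ₂ : Derivation k S S) (h : ∀ f, δ₁ (δ₂ f) = δ₂ (δ₁ f))
    (x : S[M]) :
    coeffDerivation δ₁ (coeffDerivation δ₂ x) = coeffDerivation δ₂ (coeffDerivation δ₁ x) := by
  ext; simp [coeffDerivation, h]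

theorem coeffDerivation_weightDerivation (δ : Derivation k S S) (w : M →+ k) (x : S[M]) :
    coeffDerivation δ (weightDerivation w x) = weightDerivation w (coeffDerivation δ x) := by
  ext; simp [coeffDerivation, coeff_weightDerivation]

end AddMonoidAlgebra

section ThomasBundle

open AddMonoidAlgebra

variable {n : ℕ} (D : Fin n → Derivation ℝ R R)

def thomasFrame : Option (Fin n) → Derivation ℝ (AddMonoidAlgebra R ℝ) (AddMonoidAlgebra R ℝ)
  | none => weightDerivation (AddMonoidHom.id ℝ)
  | some a => coeffDerivation (D a)

theorem thomasFrame_comm (hD : ∀ a b (f : R), D a (D b f) = D b (D a f))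
    (i j : Option (Fin n)) (ψ : AddMonoidAlgebra R ℝ) :
    thomasFrame D i (thomasFrame D j ψ) = thomasFrame D j (thomasFrame D i ψ) := by
  rcases i with _ | a <;> rcases j with _ | b
  · rfl
  · exact (coeffDerivation_weightDerivation (D b) _ ψ).symm
  · exact coeffDerivation_weightDerivation (D a) _ ψ
  · exact coeffDerivation_comm _ _ (hD a b) ψ

theorem act_eq_frameAct (Xa : Fin n → AddMonoidAlgebra R ℝ) (X0 ψ : AddMonoidAlgebra R ℝ) :
    act D Xa X0 ψ = frameAct (thomasFrame D) (Option.elim · X0 Xa) ψ := by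
  rw [frameAct, Fintype.sum_option, add_comm]
  rfl

theorem divg_eq_frameDiv (Xa : Fin n → AddMonoidAlgebra R ℝ) (X0 : AddMonoidAlgebra R ℝ) :
    divg D Xa X0 = frameDiv (thomasFrame D) (Option.elim · X0 Xa) - X0 := by
  rw [frameDiv, Fintype.sum_option, add_comm]
  rfl

end ThomasBundle

theorem div_of_commutator {n : ℕ} (D : Fin n → Derivation ℝ R R)
    (hD : ∀ a b (f : R), D a (D b f) = D b (D a f))
    (Xa Ya : Fin n → AddMonoidAlgebra R ℝ) (X0 Y0 : AddMonoidAlgebra R ℝ) :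
    divg D (fun b => act D Xa X0 (Ya b) - act D Ya Y0 (Xa b))
           (act D Xa X0 Y0 - act D Ya Y0 X0)
      = act D Xa X0 (divg D Ya Y0) - act D Ya Y0 (divg D Xa X0) := by
  have hbracket : (Option.elim · (act D Xa X0 Y0 - act D Ya Y0 X0)
      fun b => act D Xa X0 (Ya b) - act D Ya Y0 (Xa b))
      = frameBracket (thomasFrame D) (Option.elim · X0 Xa) (Option.elim · Y0 Ya) := by
    funext i
    cases i <;> simp only [frameBracket, act_eq_frameAct, Option.elim]
  rw [divg_eq_frameDiv, hbracket, frameDiv_frameBracket (thomasFrame_comm D hD),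
    divg_eq_frameDiv, divg_eq_frameDiv]
  simp only [act_eq_frameAct, frameAct_sub]
  abel

end
end

section
/- The formal divergence on operators satisfies the identity δ[D₁,D₂] = [δD₁, D₂] + [D₁, δD₂] + [δD₁, δD₂], where δ(D) = −(D − (−1)^k D*) for D of order ≤ k and [·,·] is the commutator of operators. -/
/-!
Expanding the brackets, `⁅δD₁, D₂⁆ + ⁅D₁, δD₂⁆ + ⁅δD₁, δD₂⁆ = (-1)^(k₁+k₂) ⁅D₁*, D₂*⁆ - ⁅D₁, D₂⁆`,
and by skew-symmetry this is `δ⁅D₁, D₂⁆` whenever `(-1)^(k₁+k₂-1) ⁅D₂*, D₁*⁆ = (-1)^(k₁+k₂) ⁅D₁*, D₂*⁆`.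
For `k₁ + k₂ ≥ 1` that is a sign computation. For `k₁ = k₂ = 0` the exponent `k₁ + k₂ - 1` truncates
to `0` in `ℕ`, but then `D₁*` and `D₂*` are multiplication operators, which commute, so both of these terms vanish.
-/

noncomputable section

variable {A : Type*} [CommRing A] [Algebra ℝ A]

def mulOp (a : A) : Module.End ℝ A := LinearMap.mulLeft ℝ a

def ordLE : ℕ → Module.End ℝ A → Prop
  | 0, T => ∀ a : A, ⁅T, mulOp a⁆ = 0
  | (k + 1), T => ∀ a : A, ordLE k ⁅T, mulOp a⁆

theorem neg_one_pow_sub_one {R : Type*} [Monoid R] [HasDistribNeg R] {n : ℕ} (hn : n ≠ 0) :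
    (-1 : R) ^ (n - 1) = -(-1) ^ n := by
  rw [← pow_sub_one_mul hn (-1 : R), mul_neg_one, neg_neg]

section Divergence

variable {R L : Type*} [CommRing R] [LieRing L] [LieAlgebra R L]

/-- The formal divergence `δ(D) = -(D - ε D*)`, with `ε = (-1)^k` for `D` of order `≤ k`. -/
def divergence (ε : R) (D Dstar : L) : L := -(D - ε • Dstar)

theorem divergence_lie {ε ε₁ ε₂ : R} {x y x' y' : L}
    (h : ε • ⁅y', x'⁆ = (ε₁ * ε₂) • ⁅x', y'⁆) :
    divergence ε ⁅x, y⁆ ⁅y', x'⁆ =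
      ⁅divergence ε₁ x x', y⁆ + ⁅x, divergence ε₂ y y'⁆ +
        ⁅divergence ε₁ x x', divergence ε₂ y y'⁆ := by
  simp only [divergence, neg_lie, lie_neg, sub_lie, lie_sub, smul_lie, lie_smul, h]
  module

end Divergence

theorem eq_mulOp_of_ordLE_zero {S : Module.End ℝ A} (hS : ordLE 0 S) : S = mulOp (S 1) := by
  ext b
  have h := congrArg (· 1) (hS b)
  simp only [Ring.lie_def, LinearMap.sub_apply, Module.End.mul_apply, LinearMap.zero_apply, mulOp,
    LinearMap.mulLeft_apply, mul_one, sub_eq_zero] at h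
  simp [mulOp, h, mul_comm]

theorem lie_eq_zero_of_ordLE_zero {S T : Module.End ℝ A} (hS : ordLE 0 S) (hT : ordLE 0 T) :
    ⁅S, T⁆ = 0 := by
  rw [eq_mulOp_of_ordLE_zero hT]
  exact hS _

theorem divergence_of_commutator_of_operators_general
    (k₁ k₂ : ℕ) (D₁ D₂ D₁s D₂s : Module.End ℝ A)
    (hord₁s : ordLE k₁ D₁s) (hord₂s : ordLE k₂ D₂s)
    (δ₁ δ₂ δbr : Module.End ℝ A)
    (hδ₁ : δ₁ = -(D₁ - ((-1 : ℝ) ^ k₁) • D₁s))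
    (hδ₂ : δ₂ = -(D₂ - ((-1 : ℝ) ^ k₂) • D₂s))
    (hδbr : δbr = -(⁅D₁, D₂⁆ - ((-1 : ℝ) ^ (k₁ + k₂ - 1)) • ⁅D₂s, D₁s⁆)) :
    δbr = ⁅δ₁, D₂⁆ + ⁅D₁, δ₂⁆ + ⁅δ₁, δ₂⁆ := by
  let : LieRing (Module.End ℝ A) := LieRing.ofAssociativeRing
  subst hδ₁ hδ₂ hδbr
  refine divergence_lie ?_
  rcases eq_or_ne (k₁ + k₂) 0 with hk | hk
  · obtain ⟨rfl, rfl⟩ := Nat.add_eq_zero_iff.mp hk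
    rw [lie_eq_zero_of_ordLE_zero hord₂s hord₁s, lie_eq_zero_of_ordLE_zero hord₁s hord₂s,
      smul_zero, smul_zero]
  · rw [neg_one_pow_sub_one hk, pow_add, ← lie_skew, smul_neg, neg_smul, neg_neg]

theorem divergence_of_commutator_of_operators
    (pair : A → A → ℝ)
    (hsymm : ∀ a b, pair a b = pair b a)
    (hinv : ∀ a b c, pair (a * b) c = pair a (b * c))
    (hnd : ∀ a : A, (∀ b, pair a b = 0) → a = 0)
    (k₁ k₂ : ℕ) (D₁ D₂ D₁s D₂s : Module.End ℝ A)
    (hord₁ : ordLE k₁ D₁) (hord₂ : ordLE k₂ D₂)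
    (hord₁s : ordLE k₁ D₁s) (hord₂s : ordLE k₂ D₂s)
    (hadj₁ : ∀ ψ χ, pair (D₁ ψ) χ = pair ψ (D₁s χ))
    (hadj₂ : ∀ ψ χ, pair (D₂ ψ) χ = pair ψ (D₂s χ))
    (δ₁ δ₂ δbr : Module.End ℝ A)
    (hδ₁ : δ₁ = -(D₁ - ((-1 : ℝ) ^ k₁) • D₁s))
    (hδ₂ : δ₂ = -(D₂ - ((-1 : ℝ) ^ k₂) • D₂s))
    (hδbr : δbr = -(⁅D₁, D₂⁆ - ((-1 : ℝ) ^ (k₁ + k₂ - 1)) • ⁅D₂s, D₁s⁆)) :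
    δbr = ⁅δ₁, D₂⁆ + ⁅D₁, δ₂⁆ + ⁅δ₁, δ₂⁆ :=
  divergence_of_commutator_of_operators_general k₁ k₂ D₁ D₂ D₁s D₂s hord₁s hord₂s δ₁ δ₂ δbr hδ₁ hδ₂
    hδbr

end
end

section
/- A first-order differential operator L on the algebra of densities is anti-self-adjoint (L* = −L) with respect to the invariant scalar product if and only if it is a generalized Lie derivative, i.e., of the form L = t^μ(X^a ∂_a − (μ−1)^{-1} ∂_a X^a · w) for some coefficients X^a (assuming L has homogeneous weight μ ≠ 1 and L(1) = 0). -/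
/-!
On monomials, `(L (f t^l), g t^m) + (f t^l, L (g t^m))` vanishes unless `l + m = 1 - μ`, and then
equals `∫ ((∑ X^a ∂_a f) g + f ∑ X^a ∂_a g + (l + m) X^0 f g) = ∫ ((1 - μ) X^0 - ∂_a X^a) f g`
after one integration by parts. Hence `L + L*` is governed by the single function
`(1 - μ) X^0 - ∂_a X^a`, which vanishes iff it pairs to zero with every `g` (take `f = 1`).
-/

noncomputable section

/- Densities on ℝ^n are `AddMonoidAlgebra R ℝ`, with `Finsupp.single λ f` standing for `f(x) t^λ`;
`R` models compactly supported smooth functions, `D a = ∂/∂x^a`, and `intR` is integration over `x`.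
`wop` is the weight operator `t ∂_t`. -/

variable {R : Type*} [CommRing R] [Algebra ℝ R]

open AddMonoidAlgebra

theorem AddMonoidAlgebra.eq_zero_of_biadditive_of_single {k G M : Type*} [Semiring k]
    [AddCommGroup M] (B : AddMonoidAlgebra k G → AddMonoidAlgebra k G → M)
    (add_left : ∀ x y z, B (x + y) z = B x z + B y z)
    (add_right : ∀ x y z, B x (y + z) = B x y + B x z)
    (single_single : ∀ g r h s, B (single g r) (single h s) = 0) (x y : AddMonoidAlgebra k G) :
    B x y = 0 := by
  induction x using AddMonoidAlgebra.induction_linear with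
  | zero => simpa using add_left 0 0 y
  | add x x' hx hx' => rw [add_left, hx, hx', add_zero]
  | single g r =>
    induction y using AddMonoidAlgebra.induction_linear with
    | zero => simpa using add_right (single g r) 0 0
    | add y y' hy hy' => rw [add_right, hy, hy', add_zero]
    | single h s => exact single_single g r h s

theorem LinearMap.map_mul_derivation_eq_neg {K A M : Type*} [CommRing K] [CommRing A]
    [Algebra K A] [AddCommGroup M] [Module K M] (I : A →ₗ[K] M) (d : Derivation K A A)
    (h : ∀ f, I (d f) = 0) (x y : A) : I (x * d y) = -I (d x * y) := by
  have := h (x * y)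
  rw [Derivation.leibniz, smul_eq_mul, smul_eq_mul, map_add, mul_comm y] at this
  exact eq_neg_of_add_eq_zero_left this

@[simp]
theorem paD_single {n : ℕ} (D : Fin n → Derivation ℝ R R) (a : Fin n) (l : ℝ) (f : R) :
    paD D a (single l f) = single l (D a f) := by
  rw [paD, coeff_single, Finsupp.mapRange_single]; rfl

@[simp]
theorem wop_single (l : ℝ) (f : R) : wop (single l f) = single l (l • f) := by
  rw [wop, coeff_single, Finsupp.sum_single_index (by simp)]; rfl

theorem paD_add {n : ℕ} (D : Fin n → Derivation ℝ R R) (a : Fin n) (ψ χ : AddMonoidAlgebra R ℝ) :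
    paD D a (ψ + χ) = paD D a ψ + paD D a χ := by
  simp [paD, coeff_add, Finsupp.mapRange_add (map_add (D a))]

theorem wop_add (ψ χ : AddMonoidAlgebra R ℝ) : wop (ψ + χ) = wop ψ + wop χ := by
  simp [wop, coeff_add, Finsupp.sum_add_index', smul_add]

section Operator

variable {n : ℕ} (D : Fin n → Derivation ℝ R R) (μ : ℝ) (Xa : Fin n → R) (X0 : R)

def firstOrderOp (ψ : AddMonoidAlgebra R ℝ) : AddMonoidAlgebra R ℝ :=
  (∑ a, single μ (Xa a) * paD D a ψ) + single μ X0 * wop ψ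

theorem firstOrderOp_add (ψ χ : AddMonoidAlgebra R ℝ) :
    firstOrderOp D μ Xa X0 (ψ + χ) = firstOrderOp D μ Xa X0 ψ + firstOrderOp D μ Xa X0 χ := by
  simp only [firstOrderOp, paD_add, wop_add, mul_add, Finset.sum_add_distrib]
  abel

theorem firstOrderOp_single (l : ℝ) (f : R) :
    firstOrderOp D μ Xa X0 (single l f) = single (μ + l) (∑ a, Xa a * D a f + X0 * l • f) := by
  simp only [firstOrderOp, paD_single, wop_single, single_mul_single, single_add]
  exact congrArg (· + _) (map_sum (singleAddHom (μ + l)) _ _).symm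

end Operator

def densityPairing (intR : R →ₗ[ℝ] ℝ) (ψ χ : AddMonoidAlgebra R ℝ) : ℝ :=
  intR ((ψ * χ).coeff 1)

section Pairing

variable (intR : R →ₗ[ℝ] ℝ)

theorem densityPairing_add_left (ψ ψ' χ : AddMonoidAlgebra R ℝ) :
    densityPairing intR (ψ + ψ') χ = densityPairing intR ψ χ + densityPairing intR ψ' χ := by
  simp [densityPairing, add_mul, coeff_add]

theorem densityPairing_add_right (ψ χ χ' : AddMonoidAlgebra R ℝ) :
    densityPairing intR ψ (χ + χ') = densityPairing intR ψ χ + densityPairing intR ψ χ' := by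
  simp [densityPairing, mul_add, coeff_add]

theorem densityPairing_single_single (l m : ℝ) (f g : R) :
    densityPairing intR (single l f) (single m g) = if l + m = 1 then intR (f * g) else 0 := by
  rw [densityPairing, single_mul_single, coeff_single, Finsupp.single_apply]
  split_ifs <;> simp

end Pairing

theorem densityPairing_firstOrderOp_single_add_single_firstOrderOp {n : ℕ}
    (D : Fin n → Derivation ℝ R R) (intR : R →ₗ[ℝ] ℝ) (hparts : ∀ a f, intR (D a f) = 0)
    (μ : ℝ) (Xa : Fin n → R) (X0 : R) (l m : ℝ) (f g : R) :
    densityPairing intR (firstOrderOp D μ Xa X0 (single l f)) (single m g)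
        + densityPairing intR (single l f) (firstOrderOp D μ Xa X0 (single m g))
      = if μ + l + m = 1 then intR (((1 - μ) • X0 - ∑ a, D a (Xa a)) * (f * g)) else 0 := by
  rw [firstOrderOp_single, firstOrderOp_single, densityPairing_single_single,
    densityPairing_single_single, show l + (μ + m) = μ + l + m by ring]
  split_ifs with h
  · have leibniz : ∑ a, Xa a * D a (f * g) = (∑ a, Xa a * D a f) * g + f * ∑ a, Xa a * D a g := by
      simp only [Derivation.leibniz, smul_eq_mul, Finset.sum_mul, Finset.mul_sum,
        ← Finset.sum_add_distrib]
      exact Finset.sum_congr rfl fun a _ => by ring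
    have integrand : (∑ a, Xa a * D a f + X0 * l • f) * g + f * (∑ a, Xa a * D a g + X0 * m • g)
        = ∑ a, Xa a * D a (f * g) + (1 - μ) • (X0 * (f * g)) := by
      rw [show 1 - μ = l + m by linarith, leibniz]
      simp only [Algebra.smul_def, map_add]
      ring
    rw [← map_add, integrand, map_add, map_sum, sub_mul, map_sub, Finset.sum_mul, map_sum,
      smul_mul_assoc, Finset.sum_congr rfl fun a _ =>
        LinearMap.map_mul_derivation_eq_neg intR (D a) (hparts a) _ _, Finset.sum_neg_distrib]
    simp only [map_smul]
    abel
  · simp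

theorem first_order_anti_self_adjoint_iff_generalized_Lie
    {n : ℕ} (D : Fin n → Derivation ℝ R R)
    (intR : R →ₗ[ℝ] ℝ)
    (hparts : ∀ (a : Fin n) (f : R), intR (D a f) = 0)
    (hnd : ∀ f : R, (∀ g, intR (f * g) = 0) → f = 0)
    (μ : ℝ) (hμ : μ ≠ 1) (Xa : Fin n → R) (X0 : R)
    (pair : AddMonoidAlgebra R ℝ → AddMonoidAlgebra R ℝ → ℝ)
    (hpair : ∀ ψ χ, pair ψ χ = intR ((ψ * χ).coeff 1))
    (L : AddMonoidAlgebra R ℝ → AddMonoidAlgebra R ℝ)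
    (hL : ∀ ψ, L ψ = (∑ a, AddMonoidAlgebra.single μ (Xa a) * paD D a ψ)
        + AddMonoidAlgebra.single μ X0 * wop ψ) :
    (∀ ψ χ, pair (L ψ) χ = -pair ψ (L χ))
      ↔ X0 = -((μ - 1)⁻¹ • ∑ a, D a (Xa a)) := by
  obtain rfl : L = firstOrderOp D μ Xa X0 := funext hL
  obtain rfl : pair = densityPairing intR := funext₂ hpair
  have key := densityPairing_firstOrderOp_single_add_single_firstOrderOp D intR hparts μ Xa X0
  set c := (1 - μ) • X0 - ∑ a, D a (Xa a)
  set P := densityPairing intR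
  set L := firstOrderOp D μ Xa X0
  calc (∀ ψ χ, P (L ψ) χ = -P ψ (L χ)) ↔ ∀ ψ χ, P (L ψ) χ + P ψ (L χ) = 0 := by
        simp only [add_eq_zero_iff_eq_neg]
    _ ↔ ∀ l f m g, (if μ + l + m = 1 then intR (c * (f * g)) else 0) = 0 := by
        refine ⟨fun h l f m g => key l m f g ▸ h _ _,
          fun h => eq_zero_of_biadditive_of_single _ ?_ ?_ fun l f m g => (key l m f g).trans (h ..)⟩
        · intro x y z
          simp only [L, P, firstOrderOp_add, densityPairing_add_left]
          abel
        · intro x y z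
          simp only [L, P, firstOrderOp_add, densityPairing_add_right]
          abel
    _ ↔ c = 0 :=
        ⟨fun h => hnd c fun g => by simpa using h 0 1 (1 - μ) g, fun h => by simp [h]⟩
    _ ↔ X0 = -((μ - 1)⁻¹ • ∑ a, D a (Xa a)) := by
        rw [sub_eq_zero, ← neg_smul, ← inv_neg, neg_sub,
          eq_inv_smul_iff₀ (sub_ne_zero.mpr hμ.symm)]

end
end

section
/- On the Thomas bundle, the canonical odd Laplacian applied to a multivector field P = P₀(x,t,x*) + t t* P₁(x,t,x*) gives δP = δ₀P₀ − (1−w)(P₁) − t t* δ₀P₁, where δ₀ = ∂_{x^a}∂_{x*_a} and w = t∂_t; consequently, if δP = 0 and 1−w is invertible on P₁, then P₁ = (1−w)^{-1}δ₀P₀, so P is determined by P₀. -/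
noncomputable section

/- Model of multivector fields on the Thomas bundle.  Multivectors in the odd
variables x*_1,…,x*_n over `C^∞(ℝ^n)` are modeled as `W := Finset (Fin n) → R`
(the coefficient of the monomial `x*_S`), where `R` is a commutative ℝ-algebra
with derivations `D a = ∂/∂x^a`; `dxs a` is the odd derivative `∂/∂x*_a` and
`delta0 = Σ_a ∂/∂x^a ∂/∂x*_a`.  Adjoining the even variable `t` gives
`V := ℝ →₀ W`, with `single λ c = c·t^λ`; the odd variable `t*` is adjoined by
passing to pairs `P = (P₀, P₁) ∈ V × V`, representing `P = P₀ + t t* P₁`.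
The canonical odd Laplacian is `δP := δ₀P + t²∂_t(t⁻²∂_{t*}P)`, where
`∂_{t*}(P₀ + t t* P₁) = t P₁` and `δ₀(P₀ + t t* P₁) = δ₀P₀ − t t* δ₀P₁`.
Claims: `δP = δ₀P₀ − (1 − t∂_t)(P₁) − t t* δ₀P₁`; consequently, for `P`
homogeneous of weight μ ≠ 1 with `δP = 0`, one has `P₁ = (1−μ)⁻¹ δ₀P₀`,
so `P` is determined by `P₀`. -/

variable {R : Type*} [CommRing R] [Algebra ℝ R] {n : ℕ}

/-- Odd derivative `∂/∂x*_a` on multivectors. -/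
def dxs (a : Fin n) (P : Finset (Fin n) → R) : Finset (Fin n) → R :=
  fun S => if a ∈ S then 0
    else ((-1 : ℤ) ^ (S.filter (· < a)).card) • P (insert a S)

/-- `δ₀ = Σ_a ∂/∂x^a ∂/∂x*_a`. -/
def delta0 (D : Fin n → Derivation ℝ R R) (P : Finset (Fin n) → R) :
    Finset (Fin n) → R :=
  fun S => ∑ a, D a (dxs a P S)

/-- Multiplication by `t^k`. -/
def shiftV (k : ℝ) (v : ℝ →₀ (Finset (Fin n) → R)) :
    ℝ →₀ (Finset (Fin n) → R) :=
  Finsupp.mapDomain (· + k) v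

/-- The derivative `∂/∂t`. -/
def dtV (v : ℝ →₀ (Finset (Fin n) → R)) : ℝ →₀ (Finset (Fin n) → R) :=
  v.sum fun l c => Finsupp.single (l - 1) (l • c)

/-- The weight operator `t∂_t`. -/
def wopV (v : ℝ →₀ (Finset (Fin n) → R)) : ℝ →₀ (Finset (Fin n) → R) :=
  v.sum fun l c => Finsupp.single l (l • c)

/-- Coefficientwise `δ₀` on `V`. -/
def delta0V (D : Fin n → Derivation ℝ R R) (v : ℝ →₀ (Finset (Fin n) → R)) :
    ℝ →₀ (Finset (Fin n) → R) :=
  v.sum fun l c => Finsupp.single l (delta0 D c)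

/-- The canonical odd Laplacian `δP = δ₀P + t²∂_t(t⁻²∂_{t*}P)` on
`P = P₀ + t t* P₁`, encoded as the pair `(P₀, P₁)`. -/
def deltaBV (D : Fin n → Derivation ℝ R R)
    (P : (ℝ →₀ (Finset (Fin n) → R)) × (ℝ →₀ (Finset (Fin n) → R))) :
    (ℝ →₀ (Finset (Fin n) → R)) × (ℝ →₀ (Finset (Fin n) → R)) :=
  (delta0V D P.1 + shiftV 2 (dtV (shiftV (-2) (shiftV 1 P.2))),
   - delta0V D P.2)

/-! All operators are additive, so the formula reduces to monomials `c tˡ`, where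
`t² ∂_t (t⁻¹ c tˡ) = (l - 1) c tˡ = (t ∂_t - 1)(c tˡ)`.  For `P` of weight `μ` the first
component of `δP` is then `(δ₀p₀ - (1 - μ) p₁) t^μ`, which can be solved for `p₁` when `μ ≠ 1`. -/

lemma delta0_zero (D : Fin n → Derivation ℝ R R) :
    delta0 D (0 : Finset (Fin n) → R) = 0 := by
  funext S
  simp [delta0, dxs]

omit [Algebra ℝ R] in
lemma shiftV_single (k l : ℝ) (c : Finset (Fin n) → R) :
    shiftV k (Finsupp.single l c) = Finsupp.single (l + k) c :=
  Finsupp.mapDomain_single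

omit [Algebra ℝ R] in
lemma shiftV_add (k : ℝ) (v w : ℝ →₀ (Finset (Fin n) → R)) :
    shiftV k (v + w) = shiftV k v + shiftV k w :=
  Finsupp.mapDomain_add

omit [Algebra ℝ R] in
lemma shiftV_shiftV (k k' : ℝ) (v : ℝ →₀ (Finset (Fin n) → R)) :
    shiftV k (shiftV k' v) = shiftV (k' + k) v := by
  simp only [shiftV, ← Finsupp.mapDomain_comp, Function.comp_def, add_assoc]

lemma dtV_single (l : ℝ) (c : Finset (Fin n) → R) :
    dtV (Finsupp.single l c) = Finsupp.single (l - 1) (l • c) :=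
  Finsupp.sum_single_index (by simp)

lemma dtV_add (v w : ℝ →₀ (Finset (Fin n) → R)) : dtV (v + w) = dtV v + dtV w :=
  Finsupp.sum_add_index' (by simp) (by simp [smul_add])

lemma wopV_single (l : ℝ) (c : Finset (Fin n) → R) :
    wopV (Finsupp.single l c) = Finsupp.single l (l • c) :=
  Finsupp.sum_single_index (by simp)

lemma wopV_add (v w : ℝ →₀ (Finset (Fin n) → R)) : wopV (v + w) = wopV v + wopV w :=
  Finsupp.sum_add_index' (by simp) (by simp [smul_add])

lemma delta0V_single (D : Fin n → Derivation ℝ R R) (l : ℝ) (c : Finset (Fin n) → R) :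
    delta0V D (Finsupp.single l c) = Finsupp.single l (delta0 D c) :=
  Finsupp.sum_single_index (by simp [delta0_zero])

/-- `t² ∂_t t⁻¹ = t ∂_t - 1`. -/
lemma shiftV_dtV_shiftV_neg_one (v : ℝ →₀ (Finset (Fin n) → R)) :
    shiftV 2 (dtV (shiftV (-1) v)) = wopV v - v := by
  induction v using Finsupp.induction_linear with
  | zero => simp [shiftV, dtV, wopV]
  | add v w hv hw =>
    rw [shiftV_add, dtV_add, shiftV_add, hv, hw, wopV_add]
    abel
  | single l c =>
    rw [shiftV_single, dtV_single, shiftV_single, wopV_single, ← Finsupp.single_sub,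
      ← sub_eq_add_neg, sub_smul, one_smul]
    congr 1
    ring

theorem deltaBV_eq (D : Fin n → Derivation ℝ R R)
    (P : (ℝ →₀ (Finset (Fin n) → R)) × (ℝ →₀ (Finset (Fin n) → R))) :
    deltaBV D P = (delta0V D P.1 - (P.2 - wopV P.2), - delta0V D P.2) := by
  rw [deltaBV, shiftV_shiftV, show (1 : ℝ) + -2 = -1 by norm_num, shiftV_dtV_shiftV_neg_one,
    ← neg_sub, ← sub_eq_add_neg]

lemma deltaBV_single (D : Fin n → Derivation ℝ R R) (μ : ℝ) (p₀ p₁ : Finset (Fin n) → R) :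
    deltaBV D (Finsupp.single μ p₀, Finsupp.single μ p₁) =
      (Finsupp.single μ (delta0 D p₀ - (1 - μ) • p₁),
        - Finsupp.single μ (delta0 D p₁)) := by
  rw [deltaBV_eq, delta0V_single, delta0V_single, wopV_single, sub_smul, one_smul,
    Finsupp.single_sub, Finsupp.single_sub]

theorem eq_inv_smul_delta0_of_deltaBV_single_eq_zero (D : Fin n → Derivation ℝ R R)
    {μ : ℝ} (hμ : μ ≠ 1) {p₀ p₁ : Finset (Fin n) → R}
    (h : deltaBV D (Finsupp.single μ p₀, Finsupp.single μ p₁) = 0) :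
    p₁ = (1 - μ)⁻¹ • delta0 D p₀ := by
  have h₀ : delta0 D p₀ - (1 - μ) • p₁ = 0 :=
    Finsupp.single_eq_zero.mp (congrArg Prod.fst (deltaBV_single D μ p₀ p₁ ▸ h))
  rw [sub_eq_zero.mp h₀, inv_smul_smul₀ (sub_ne_zero.mpr hμ.symm)]

theorem odd_Laplacian_formula_and_homogeneous_solution
    (D : Fin n → Derivation ℝ R R) :
    (∀ P : (ℝ →₀ (Finset (Fin n) → R)) × (ℝ →₀ (Finset (Fin n) → R)),
      deltaBV D P = (delta0V D P.1 - (P.2 - wopV P.2), - delta0V D P.2))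
    ∧ ∀ (μ : ℝ), μ ≠ 1 → ∀ p₀ p₁ : Finset (Fin n) → R,
        deltaBV D (Finsupp.single μ p₀, Finsupp.single μ p₁) = 0 →
          p₁ = (1 - μ)⁻¹ • delta0 D p₀ :=
  ⟨deltaBV_eq D, fun _ hμ _ _ h => eq_inv_smul_delta0_of_deltaBV_single_eq_zero D hμ h⟩

end
end

section
/- The canonical odd Laplacian on multivector fields on the Thomas bundle squares to zero: δ² = 0, where δ = ∂_{x^a}∂_{x*_a} + t²∂_t t^{-2} ∂_{t*}. -/
noncomputable section

/- Same model as for the previous statement: multivector fields on the Thomas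
bundle are pairs `P = (P₀, P₁)` (representing `P₀ + t t* P₁`) of elements of
`V = ℝ →₀ (Finset (Fin n) → R)`, over a commutative ℝ-algebra `R` (modeling
`C^∞(ℝ^n)`) with commuting derivations `D a = ∂/∂x^a`.  The canonical odd
Laplacian is `δ = Σ_a ∂_{x^a}∂_{x*_a} + t²∂_t ∘ M_{t⁻²} ∘ ∂_{t*}`.
Claim: `δ ∘ δ = 0`. -/

variable {R : Type*} [CommRing R] [Algebra ℝ R] {n : ℕ}

/-!
The `x`-part `δ₀ = Σ_a ∂_{x^a} ∂_{x*_a}` squares to zero because the contractions `∂_{x*_a}`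
anticommute while the derivations `∂_{x^a}` commute, so the double sum over `(a, b)` is
antisymmetric. The `t`-part only carries the `t t*` component into the other one, so its square
vanishes, and the cross terms cancel: `δ₀` acts coefficientwise and `ℝ`-linearly, hence commutes
with the shifts in `t` and with `∂_t`, while it enters the `t t*` component with the opposite sign.
-/

open Finset

lemma card_filter_lt_insert {α : Type*} [LinearOrder α] {a : α} {S : Finset α} (ha : a ∉ S)
    (b : α) : #{x ∈ insert a S | x < b} = #{x ∈ S | x < b} + if a < b then 1 else 0 := by
  rw [filter_insert]
  split_ifs with h
  · exact card_insert_of_notMem fun h' => ha (mem_of_mem_filter a h')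
  · rfl

omit [Algebra ℝ R] in
lemma dxs_dxs_self (a : Fin n) (P : Finset (Fin n) → R) : dxs a (dxs a P) = 0 := by
  funext S
  simp [dxs]

omit [Algebra ℝ R] in
/-- Moving `a` past `b` changes exactly one of the two sign exponents, by one. -/
lemma dxs_dxs_anticomm (a b : Fin n) (P : Finset (Fin n) → R) (S : Finset (Fin n)) :
    dxs a (dxs b P) S = -dxs b (dxs a P) S := by
  rcases eq_or_ne a b with rfl | hab
  · simp [dxs_dxs_self]
  by_cases ha : a ∈ S
  · simp [dxs, ha]
  by_cases hb : b ∈ S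
  · simp [dxs, hb]
  have hba : b ∉ insert a S := by simp [hab.symm, hb]
  have hab' : a ∉ insert b S := by simp [hab, ha]
  simp only [dxs, if_neg ha, if_neg hb, if_neg hba, if_neg hab', card_filter_lt_insert ha,
    card_filter_lt_insert hb, insert_comm a b S, smul_smul, ← pow_add]
  rcases hab.lt_or_gt with h | h <;> simp [h, h.not_gt] <;> ring

lemma Finset.sum_sum_eq_zero_of_antisymm {ι M : Type*} [Fintype ι] [AddCommGroup M]
    (g : ι → ι → M) (hanti : ∀ a b, g a b = -g b a) (hdiag : ∀ a, g a a = 0) :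
    ∑ a, ∑ b, g a b = 0 := by
  rw [← sum_product']
  refine sum_ninvolution Prod.swap (fun p => ?_) (fun p hp hswap => hp ?_)
    (fun _ => mem_univ _) Prod.swap_swap
  · simp [hanti p.1 p.2]
  · obtain ⟨a, b⟩ := p
    obtain rfl : b = a := congrArg Prod.fst hswap
    exact hdiag b

lemma dxs_delta0 (D : Fin n → Derivation ℝ R R) (a : Fin n) (P : Finset (Fin n) → R)
    (S : Finset (Fin n)) : dxs a (delta0 D P) S = ∑ b, D b (dxs a (dxs b P) S) := by
  by_cases ha : a ∈ S
  · simp [dxs, ha]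
  · simp only [dxs, delta0, if_neg ha, smul_sum, map_zsmul]

lemma delta0_delta0 (D : Fin n → Derivation ℝ R R) (hD : ∀ a b (f : R), D a (D b f) = D b (D a f))
    (P : Finset (Fin n) → R) : delta0 D (delta0 D P) = 0 := by
  funext S
  have hexpand : delta0 D (delta0 D P) S = ∑ a, ∑ b, D a (D b (dxs a (dxs b P) S)) := by
    simp only [delta0, dxs_delta0, map_sum]
  rw [hexpand]
  refine sum_sum_eq_zero_of_antisymm _ (fun a b => ?_) (fun a => by simp [dxs_dxs_self])
  rw [dxs_dxs_anticomm, map_neg, map_neg, hD]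

omit [Algebra ℝ R] in
lemma dxs_add (a : Fin n) (P Q : Finset (Fin n) → R) : dxs a (P + Q) = dxs a P + dxs a Q := by
  funext S
  simp only [dxs, Pi.add_apply]
  split_ifs <;> simp [smul_add]

lemma dxs_smul (a : Fin n) (c : ℝ) (P : Finset (Fin n) → R) : dxs a (c • P) = c • dxs a P := by
  funext S
  simp only [dxs, Pi.smul_apply]
  split_ifs <;> simp

def delta0Linear (D : Fin n → Derivation ℝ R R) :
    (Finset (Fin n) → R) →ₗ[ℝ] (Finset (Fin n) → R) where
  toFun := delta0 D
  map_add' P Q := by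
    funext S
    simp [delta0, dxs_add, sum_add_distrib]
  map_smul' c P := by
    funext S
    simp [delta0, dxs_smul, smul_sum]

lemma delta0V_eq_mapRange (D : Fin n → Derivation ℝ R R) (v : ℝ →₀ (Finset (Fin n) → R)) :
    delta0V D v = Finsupp.mapRange.linearMap (delta0Linear D) v := by
  rw [Finsupp.mapRange.linearMap_apply, ← (Finsupp.mapRange _ _ v).sum_single,
    Finsupp.sum_mapRange_index fun _ => Finsupp.single_zero _]
  rfl

lemma delta0V_delta0V (D : Fin n → Derivation ℝ R R)
    (hD : ∀ a b (f : R), D a (D b f) = D b (D a f)) (v : ℝ →₀ (Finset (Fin n) → R)) :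
    delta0V D (delta0V D v) = 0 := by
  ext l : 1
  simp [delta0V_eq_mapRange, delta0Linear, delta0_delta0 D hD]

lemma delta0V_add (D : Fin n → Derivation ℝ R R) (v w : ℝ →₀ (Finset (Fin n) → R)) :
    delta0V D (v + w) = delta0V D v + delta0V D w := by
  simp only [delta0V_eq_mapRange, map_add]

lemma delta0V_neg (D : Fin n → Derivation ℝ R R) (v : ℝ →₀ (Finset (Fin n) → R)) :
    delta0V D (-v) = -delta0V D v := by
  simp only [delta0V_eq_mapRange, map_neg]

lemma delta0V_shiftV (D : Fin n → Derivation ℝ R R) (k : ℝ) (v : ℝ →₀ (Finset (Fin n) → R)) :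
    delta0V D (shiftV k v) = shiftV k (delta0V D v) := by
  simp only [delta0V_eq_mapRange, shiftV, Finsupp.mapRange.linearMap_apply]
  exact (Finsupp.mapDomain_mapRange _ _ _ _ (map_add _)).symm

lemma mapRange_dtV (f : (Finset (Fin n) → R) →ₗ[ℝ] (Finset (Fin n) → R))
    (v : ℝ →₀ (Finset (Fin n) → R)) :
    Finsupp.mapRange.linearMap f (dtV v) = dtV (Finsupp.mapRange.linearMap f v) := by
  simp only [dtV, map_finsuppSum, Finsupp.mapRange.linearMap_apply, Finsupp.mapRange_single,
    map_smul]
  rw [Finsupp.sum_mapRange_index (by simp)]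

lemma delta0V_dtV (D : Fin n → Derivation ℝ R R) (v : ℝ →₀ (Finset (Fin n) → R)) :
    delta0V D (dtV v) = dtV (delta0V D v) := by
  simp only [delta0V_eq_mapRange, mapRange_dtV]

omit [Algebra ℝ R] in
lemma shiftV_neg (k : ℝ) (v : ℝ →₀ (Finset (Fin n) → R)) : shiftV k (-v) = -shiftV k v :=
  map_neg (Finsupp.mapDomain.addMonoidHom (· + k)) v

lemma dtV_neg (v : ℝ →₀ (Finset (Fin n) → R)) : dtV (-v) = -dtV v := by
  simp [dtV, Finsupp.sum_neg_index]

theorem odd_Laplacian_squares_to_zero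
    (D : Fin n → Derivation ℝ R R)
    (hD : ∀ a b (f : R), D a (D b f) = D b (D a f)) :
    ∀ P : (ℝ →₀ (Finset (Fin n) → R)) × (ℝ →₀ (Finset (Fin n) → R)),
      deltaBV D (deltaBV D P) = 0 := by
  intro P
  ext1
  · simp only [deltaBV, delta0V_add, delta0V_delta0V D hD, zero_add, delta0V_shiftV, delta0V_dtV,
      delta0V_neg, shiftV_neg, dtV_neg, add_neg_cancel, Prod.fst_zero]
  · simp only [deltaBV, delta0V_neg, neg_neg, delta0V_delta0V D hD, Prod.snd_zero]

end
end
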